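/- arXiv:1805.12543 — 3 statements merged into one kernel-verified Lean document; each statement's English description precedes it below -/
import Mathlib

section
/- Let s ∈ (0,1) and let f₀ ∈ L²(ℝ³ₓ × ℝ³ᵥ). Define f(t) via partial Fourier transform in x (dual variable ξ) and v (handled by the characteristic flow): the solution of ∂_t f + v·∂_x f + (-Δ_v)^s f = 0, f(0) = f₀, satisfies on the Fourier side (dual variables ξ for x, η for v) the explicit formula \hat f(t, ξ, η) = \hat{f₀}(ξ, η + tξ) · exp(−∫₀^t |η + (t−τ)ξ|^{2s} dτ). Consequently, there exists c > 0 such that e^{c(t(−Δ_v)^s + t^{2s+1}(−Δ_x)^s)} f(t) ∈ L²(ℝ⁶) for every t > 0, i.e. ∫∫ e^{2c(t|η|^{2s} + t^{2s+1}|ξ|^{2s})} |\hat f(t,ξ,η)|² dξ dη < ∞. -/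
/-!
On the Fourier side the transport term acts by the shear `(ξ, η) ↦ (ξ, η + t ξ)`, which preserves
Lebesgue measure, so `|f̂₀(ξ, η + t ξ)|²` is integrable. The damping exponent
`∫₀ᵗ |η + σ ξ|^{2s} dσ` dominates `t |η|^{2s} + t^{2s+1} |ξ|^{2s}` up to a constant: on some
quarter of `[0, t]` one has `|η + σ ξ| ≳ t |ξ| + |η|`, because if `|η + σ₀ ξ|` is small for an
early `σ₀`, the triangle inequality forces `|η + σ ξ| ≥ (σ - σ₀)|ξ| - |η + σ₀ ξ|` to be large for
late `σ`. Hence for small `c` the Gevrey weight is absorbed by the damping factor.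
-/

open MeasureTheory

/-- The Fourier-side solution of the generalized Kolmogorov equation
`∂_t f + v·∂_x f + (-Δ_v)^s f = 0`:
`f̂(t,ξ,η) = f̂₀(ξ, η+tξ)·exp(−∫₀^t |η+(t−τ)ξ|^{2s} dτ)`. -/
noncomputable def kolmogorovFourierSol (s : ℝ)
    (f0hat : EuclideanSpace ℝ (Fin 3) → EuclideanSpace ℝ (Fin 3) → ℂ)
    (t : ℝ) (ξ η : EuclideanSpace ℝ (Fin 3)) : ℂ :=
  f0hat ξ (η + t • ξ) *
    Complex.exp (-(∫ τ in (0 : ℝ)..t, ‖η + (t - τ) • ξ‖ ^ (2 * s) : ℝ))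

open Set

lemma mul_sub_le_intervalIntegral_of_le {f : ℝ → ℝ} {a b c d m : ℝ}
    (hca : c ≤ a) (hab : a ≤ b) (hbd : b ≤ d) (hf : IntervalIntegrable f volume c d)
    (hf_nonneg : ∀ x ∈ Icc c d, 0 ≤ f x) (hm : ∀ x ∈ Icc a b, m ≤ f x) :
    m * (b - a) ≤ ∫ x in c..d, f x := by
  calc m * (b - a) = ∫ _ in a..b, m := by simp [mul_comm]
    _ ≤ ∫ x in a..b, f x := intervalIntegral.integral_mono_on hab intervalIntegrable_const
        (hf.mono_set (uIcc_subset_uIcc (mem_uIcc_of_le (by linarith) (by linarith))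
          (mem_uIcc_of_le (by linarith) (by linarith)))) hm
    _ ≤ ∫ x in c..d, f x := intervalIntegral.integral_mono_interval hca hab hbd
        ((ae_restrict_iff' measurableSet_Ioc).2 <| ae_of_all _ fun x hx =>
          hf_nonneg x (Ioc_subset_Icc_self hx)) hf

lemma rpow_add_rpow_le_two_mul_add_rpow {x y q : ℝ} (hx : 0 ≤ x) (hy : 0 ≤ y) (hq : 0 ≤ q) :
    x ^ q + y ^ q ≤ 2 * (x + y) ^ q := by
  have hxy : x ^ q ≤ (x + y) ^ q := Real.rpow_le_rpow hx (by linarith) hq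
  have hyx : y ^ q ≤ (x + y) ^ q := Real.rpow_le_rpow hy (by linarith) hq
  linarith

section NormedSpace

variable {E : Type*} [NormedAddCommGroup E] [NormedSpace ℝ E]

lemma exists_quarter_interval_mul_norm_le {t : ℝ} (ht : 0 ≤ t) (ξ η : E) :
    ∃ a, 0 ≤ a ∧ a + t / 4 ≤ t ∧ ∀ σ ∈ Icc a (a + t / 4), t * ‖ξ‖ ≤ 4 * ‖η + σ • ξ‖ := by
  by_cases hstart : ∀ σ ∈ Icc 0 (t / 4), t * ‖ξ‖ ≤ 4 * ‖η + σ • ξ‖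
  · exact ⟨0, le_rfl, by linarith, by simpa using hstart⟩
  push Not at hstart
  obtain ⟨σ₀, ⟨hσ₀, hσ₀'⟩, hsmall⟩ := hstart
  refine ⟨3 * t / 4, by positivity, by linarith, fun σ ⟨hσ, hσ'⟩ => ?_⟩
  have hdiff : (σ - σ₀) * ‖ξ‖ ≤ ‖η + σ • ξ‖ + ‖η + σ₀ • ξ‖ := by
    calc (σ - σ₀) * ‖ξ‖ = ‖(η + σ • ξ) - (η + σ₀ • ξ)‖ := by
          rw [add_sub_add_left_eq_sub, ← sub_smul, norm_smul, Real.norm_of_nonneg (by linarith)]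
      _ ≤ ‖η + σ • ξ‖ + ‖η + σ₀ • ξ‖ := norm_sub_le _ _
  nlinarith [norm_nonneg ξ]

lemma exists_quarter_interval_mul_norm_add_norm_le {t : ℝ} (ht : 0 ≤ t) (ξ η : E) :
    ∃ a, 0 ≤ a ∧ a + t / 4 ≤ t ∧
      ∀ σ ∈ Icc a (a + t / 4), t * ‖ξ‖ + ‖η‖ ≤ 12 * ‖η + σ • ξ‖ := by
  by_cases hη : 2 * (t * ‖ξ‖) ≤ ‖η‖
  · refine ⟨0, le_rfl, by linarith, fun σ ⟨hσ, hσ'⟩ => ?_⟩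
    have hσξ : ‖σ • ξ‖ ≤ t * ‖ξ‖ := by
      rw [norm_smul, Real.norm_of_nonneg hσ]
      exact mul_le_mul_of_nonneg_right (by linarith) (norm_nonneg ξ)
    linarith [norm_sub_le_norm_add η (σ • ξ), norm_nonneg η]
  · obtain ⟨a, ha, hat, hbound⟩ := exists_quarter_interval_mul_norm_le ht ξ η
    exact ⟨a, ha, hat, fun σ hσ => by linarith [hbound σ hσ]⟩

lemma mul_norm_rpow_add_le_intervalIntegral {q t : ℝ} (hq : 0 ≤ q) (ht : 0 ≤ t) (ξ η : E) :
    t * ‖η‖ ^ q + t ^ (q + 1) * ‖ξ‖ ^ q ≤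
      8 * 12 ^ q * ∫ τ in (0 : ℝ)..t, ‖η + (t - τ) • ξ‖ ^ q := by
  rw [intervalIntegral.integral_comp_sub_left (fun σ => ‖η + σ • ξ‖ ^ q), sub_self, sub_zero]
  obtain ⟨a, ha, hat, hbound⟩ := exists_quarter_interval_mul_norm_add_norm_le ht ξ η
  set M := (t * ‖ξ‖ + ‖η‖) / 12
  have hM : 0 ≤ M := by positivity
  have hI : M ^ q * (a + t / 4 - a) ≤ ∫ σ in (0 : ℝ)..t, ‖η + σ • ξ‖ ^ q :=
    mul_sub_le_intervalIntegral_of_le ha (by linarith) hat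
      ((by fun_prop (disch := exact hq) :
        Continuous fun σ : ℝ => ‖η + σ • ξ‖ ^ q).intervalIntegrable 0 t)
      (fun σ _ => by positivity)
      (fun σ hσ => Real.rpow_le_rpow hM
        (by rw [div_le_iff₀ (by norm_num)]; linarith [hbound σ hσ]) hq)
  have hsplit : (t * ‖ξ‖) ^ q + ‖η‖ ^ q ≤ 2 * 12 ^ q * M ^ q := by
    rw [mul_assoc, ← Real.mul_rpow (by norm_num) hM, mul_div_cancel₀ _ (by norm_num)]
    exact rpow_add_rpow_le_two_mul_add_rpow (by positivity) (norm_nonneg η) hq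
  calc t * ‖η‖ ^ q + t ^ (q + 1) * ‖ξ‖ ^ q = t * ((t * ‖ξ‖) ^ q + ‖η‖ ^ q) := by
        rw [Real.rpow_add' ht (by linarith), Real.rpow_one, Real.mul_rpow ht (norm_nonneg ξ)]
        ring
    _ ≤ t * (2 * 12 ^ q * M ^ q) := by gcongr
    _ = 8 * 12 ^ q * (M ^ q * (a + t / 4 - a)) := by ring
    _ ≤ _ := by gcongr

lemma continuous_intervalIntegral_norm_add_sub_smul_rpow {q : ℝ} (hq : 0 ≤ q) (t : ℝ) :
    Continuous fun p : E × E => ∫ τ in (0 : ℝ)..t, ‖p.2 + (t - τ) • p.1‖ ^ q :=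
  intervalIntegral.continuous_parametric_intervalIntegral_of_continuous'
    (by fun_prop (disch := exact hq)) 0 t

end NormedSpace

lemma measurePreserving_prod_add_comp {α G : Type*} [MeasurableSpace α] [MeasurableSpace G]
    [AddGroup G] [MeasurableAdd₂ G] (μ : Measure α) (ν : Measure G) [SFinite μ] [SFinite ν]
    [ν.IsAddRightInvariant] {g : α → G} (hg : Measurable g) :
    MeasurePreserving (fun p : α × G => (p.1, p.2 + g p.1)) (μ.prod ν) (μ.prod ν) :=
  (MeasurePreserving.id μ).skew_product (measurable_snd.add (hg.comp measurable_fst))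
    (ae_of_all _ fun x => map_add_right_eq_self ν (g x))

lemma norm_kolmogorovFourierSol (s : ℝ)
    (f0hat : EuclideanSpace ℝ (Fin 3) → EuclideanSpace ℝ (Fin 3) → ℂ)
    (t : ℝ) (ξ η : EuclideanSpace ℝ (Fin 3)) :
    ‖kolmogorovFourierSol s f0hat t ξ η‖ =
      ‖f0hat ξ (η + t • ξ)‖ * Real.exp (-∫ τ in (0 : ℝ)..t, ‖η + (t - τ) • ξ‖ ^ (2 * s)) := by
  rw [kolmogorovFourierSol, norm_mul, Complex.norm_exp, ← Complex.ofReal_neg, Complex.ofReal_re]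

/-- Gevrey regularization for the generalized Kolmogorov equation: if `f₀ ∈ L²(ℝ⁶)`, then the
solution given by the explicit Fourier formula satisfies
`e^{c(t(−Δ_v)^s + t^{2s+1}(−Δ_x)^s)} f(t) ∈ L²` for some `c > 0` and all `t > 0`, i.e.
`∫∫ e^{2c(t|η|^{2s}+t^{2s+1}|ξ|^{2s})}|f̂(t,ξ,η)|² dξ dη < ∞`. -/
theorem kolmogorov_gevrey_smoothing (s : ℝ) (hs : s ∈ Set.Ioo (0 : ℝ) 1)
    (f0hat : EuclideanSpace ℝ (Fin 3) → EuclideanSpace ℝ (Fin 3) → ℂ)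
    (hf0 : Integrable (fun p : EuclideanSpace ℝ (Fin 3) × EuclideanSpace ℝ (Fin 3) =>
      ‖f0hat p.1 p.2‖ ^ 2)) :
    ∃ c > (0 : ℝ), ∀ t > (0 : ℝ),
      Integrable (fun p : EuclideanSpace ℝ (Fin 3) × EuclideanSpace ℝ (Fin 3) =>
        Real.exp (2 * c * (t * ‖p.2‖ ^ (2 * s) + t ^ (2 * s + 1) * ‖p.1‖ ^ (2 * s))) *
          ‖kolmogorovFourierSol s f0hat t p.1 p.2‖ ^ 2) := by
  have hq : 0 ≤ 2 * s := by linarith [hs.1]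
  refine ⟨(8 * 12 ^ (2 * s))⁻¹, by positivity, fun t ht => ?_⟩
  set weight := fun p : EuclideanSpace ℝ (Fin 3) × EuclideanSpace ℝ (Fin 3) =>
    Real.exp (2 * (8 * 12 ^ (2 * s))⁻¹ *
      (t * ‖p.2‖ ^ (2 * s) + t ^ (2 * s + 1) * ‖p.1‖ ^ (2 * s))) *
    Real.exp (-∫ τ in (0 : ℝ)..t, ‖p.2 + (t - τ) • p.1‖ ^ (2 * s)) ^ 2
  have hweight_cont : Continuous weight := by
    have hdamping := continuous_intervalIntegral_norm_add_sub_smul_rpow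
      (E := EuclideanSpace ℝ (Fin 3)) hq t
    fun_prop (disch := exact hq)
  have hweight_le : ∀ p, ‖weight p‖ ≤ 1 := fun p => by
    have hdominated := (inv_mul_le_iff₀ (by positivity)).2
      (mul_norm_rpow_add_le_intervalIntegral hq ht.le p.1 p.2)
    dsimp only [weight]
    rw [Real.norm_of_nonneg (by positivity), ← Real.exp_nat_mul, ← Real.exp_add,
      Real.exp_le_one_iff]
    push_cast
    linarith
  have hsheared : Integrable fun p : EuclideanSpace ℝ (Fin 3) × EuclideanSpace ℝ (Fin 3) =>
      ‖f0hat p.1 (p.2 + t • p.1)‖ ^ 2 := by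
    have hshear := measurePreserving_prod_add_comp volume volume
      (measurable_const_smul t : Measurable fun ξ : EuclideanSpace ℝ (Fin 3) => t • ξ)
    rw [← Measure.volume_eq_prod] at hshear
    exact (hshear.integrable_comp hf0.1).2 hf0
  refine (hsheared.bdd_mul hweight_cont.aestronglyMeasurable (ae_of_all _ hweight_le)).congr
    (ae_of_all _ fun p => ?_)
  simp only [weight, norm_kolmogorovFourierSol]
  ring
end

section
/- Let s ∈ (0,1). There exists a constant c = c(s) > 0 such that for all t > 0 and all ξ, η ∈ ℝ³: ∫₀^t |η + τξ|^{2s} dτ ≥ c (t|η|^{2s} + t^{1+2s}|ξ|^{2s}). -/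
/-!
Put `M = max ‖η‖ (t‖ξ‖)`. For `τ ∈ [0, t/4]` and `σ ∈ [3t/4, t]`, either `‖η‖` dominates and
`‖η + τξ‖ ≥ 3‖η‖/4`, or `t‖ξ‖` dominates and, since the two points `η + τξ`, `η + σξ` are at
distance `≥ t‖ξ‖/2`, one of them has norm `≥ t‖ξ‖/4`. Pairing `[0, t/4]` with `[3t/4, t]` by a
translation, the integral is therefore at least `(t/4) (M/4)^{2s}`, while
`t‖η‖^{2s} + t^{1+2s}‖ξ‖^{2s} ≤ 2t M^{2s}`.
-/

open Set intervalIntegral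

section

variable {E : Type*} [NormedAddCommGroup E] [NormedSpace ℝ E]

theorem max_norm_div_four_le_max_norm_add_smul (ξ η : E) {t τ σ : ℝ}
    (hτ : τ ∈ Icc 0 (t / 4)) (hσ : σ ∈ Icc (3 * t / 4) t) :
    max ‖η‖ (t * ‖ξ‖) / 4 ≤ max ‖η + τ • ξ‖ ‖η + σ • ξ‖ := by
  have hτξ : ‖τ • ξ‖ = τ * ‖ξ‖ := by rw [norm_smul, Real.norm_of_nonneg hτ.1]
  have hfar : ‖η‖ - t / 4 * ‖ξ‖ ≤ ‖η + τ • ξ‖ := by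
    have := norm_sub_norm_le η (-(τ • ξ))
    rw [norm_neg, hτξ, sub_neg_eq_add] at this
    nlinarith [norm_nonneg ξ, hτ.2]
  have hapart : t / 2 * ‖ξ‖ ≤ ‖η + τ • ξ‖ + ‖η + σ • ξ‖ := by
    have hdiff : (η + σ • ξ) - (η + τ • ξ) = (σ - τ) • ξ := by rw [sub_smul]; abel
    have := norm_sub_le (η + σ • ξ) (η + τ • ξ)
    rw [hdiff, norm_smul, Real.norm_of_nonneg (by linarith [hτ.1, hτ.2, hσ.1])] at this
    nlinarith [norm_nonneg ξ, hτ.2, hσ.1]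
  have ha := le_max_left ‖η + τ • ξ‖ ‖η + σ • ξ‖
  have hb := le_max_right ‖η + τ • ξ‖ ‖η + σ • ξ‖
  have htξ : 0 ≤ t * ‖ξ‖ := by nlinarith [norm_nonneg ξ, hτ.1, hτ.2]
  rcases le_total ‖η‖ (t * ‖ξ‖) with h | h
  · rw [max_eq_right h]; linarith
  · rw [max_eq_left h]; linarith [norm_nonneg η]

end

theorem Real.max_rpow_le_rpow_add_rpow {x y p : ℝ} (hx : 0 ≤ x) (hy : 0 ≤ y) (hp : 0 ≤ p) :
    max x y ^ p ≤ x ^ p + y ^ p := by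
  rw [Real.rpow_max hx hy hp]
  exact max_le_add_of_nonneg (by positivity) (by positivity)

theorem Real.rpow_add_rpow_le_two_mul_max_rpow {x y p : ℝ} (hx : 0 ≤ x) (hy : 0 ≤ y)
    (hp : 0 ≤ p) : x ^ p + y ^ p ≤ 2 * max x y ^ p := by
  rw [Real.rpow_max hx hy hp, two_mul]
  exact add_le_add (le_max_left _ _) (le_max_right _ _)

theorem mul_le_integral_of_le_add_translate {f : ℝ → ℝ} {a b h m : ℝ} (hf : Continuous f)
    (hf0 : ∀ τ ∈ Icc a b, 0 ≤ f τ) (hh : 0 ≤ h) (hab : a + 2 * h ≤ b)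
    (hm : ∀ τ ∈ Icc a (a + h), m ≤ f τ + f (τ + (b - h - a))) :
    h * m ≤ ∫ τ in a..b, f τ := by
  have hint : ∀ c d, IntervalIntegrable f MeasureTheory.volume c d :=
    fun c d => hf.intervalIntegrable c d
  have hends : h * m ≤ (∫ τ in a..a + h, f τ) + ∫ τ in b - h..b, f τ := by
    have hint' : IntervalIntegrable (fun τ => f (τ + (b - h - a))) MeasureTheory.volume a (a + h) :=
      (hf.comp (continuous_add_const _)).intervalIntegrable _ _
    have hshift : (∫ τ in b - h..b, f τ) = ∫ τ in a..a + h, f (τ + (b - h - a)) := by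
      rw [integral_comp_add_right f]; congr 1 <;> ring
    rw [hshift, ← integral_add (hint _ _) hint']
    simpa using integral_mono_on (by linarith) intervalIntegrable_const ((hint _ _).add hint') hm
  have hmiddle : 0 ≤ ∫ τ in a + h..b - h, f τ :=
    integral_nonneg (by linarith) fun τ hτ => hf0 τ ⟨by linarith [hτ.1], by linarith [hτ.2]⟩
  rw [← integral_add_adjacent_intervals (hint a (a + h)) (hint (a + h) b),
    ← integral_add_adjacent_intervals (hint (a + h) (b - h)) (hint (b - h) b)]
  linarith

/-- Hypoelliptic lower bound: for `s ∈ (0,1)` there is `c = c(s) > 0` with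
`∫₀^t |η + τξ|^{2s} dτ ≥ c(t|η|^{2s} + t^{1+2s}|ξ|^{2s})` for all `t > 0`, `ξ, η ∈ ℝ³`. -/
theorem time_average_lower_bound (s : ℝ) (hs : s ∈ Set.Ioo (0 : ℝ) 1) :
    ∃ c > (0 : ℝ), ∀ t > (0 : ℝ), ∀ ξ η : EuclideanSpace ℝ (Fin 3),
      c * (t * ‖η‖ ^ (2 * s) + t ^ (1 + 2 * s) * ‖ξ‖ ^ (2 * s))
        ≤ ∫ τ in (0 : ℝ)..t, ‖η + τ • ξ‖ ^ (2 * s) := by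
  have hp : 0 ≤ 2 * s := by linarith [hs.1]
  refine ⟨(8 * 4 ^ (2 * s))⁻¹, by positivity, fun t ht ξ η => ?_⟩
  set M := max ‖η‖ (t * ‖ξ‖)
  have hM : 0 ≤ M := (norm_nonneg η).trans (le_max_left _ _)
  have hsum : t * ‖η‖ ^ (2 * s) + t ^ (1 + 2 * s) * ‖ξ‖ ^ (2 * s) ≤ t * (2 * M ^ (2 * s)) := by
    rw [Real.rpow_add ht, Real.rpow_one, mul_assoc, ← Real.mul_rpow ht.le (norm_nonneg ξ),
      ← mul_add]
    gcongr
    exact Real.rpow_add_rpow_le_two_mul_max_rpow (norm_nonneg η) (by positivity) hp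
  have hintegral : t / 4 * (M / 4) ^ (2 * s) ≤ ∫ τ in (0 : ℝ)..t, ‖η + τ • ξ‖ ^ (2 * s) := by
    refine mul_le_integral_of_le_add_translate (by fun_prop) (fun τ _ => by positivity)
      (by positivity) (by linarith) fun τ hτ => ?_
    refine (Real.rpow_le_rpow (by positivity) ?_ hp).trans
      (Real.max_rpow_le_rpow_add_rpow (norm_nonneg _) (norm_nonneg _) hp)
    exact max_norm_div_four_le_max_norm_add_smul ξ η (by simpa using hτ)
      ⟨by linarith [hτ.1], by linarith [hτ.2]⟩
  rw [Real.div_rpow hM (by norm_num)] at hintegral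
  calc _ ≤ (8 * 4 ^ (2 * s))⁻¹ * (t * (2 * M ^ (2 * s))) := by gcongr
    _ = t / 4 * (M ^ (2 * s) / 4 ^ (2 * s)) := by field_simp; ring
    _ ≤ _ := hintegral
end

section
/- Let m ≥ 5 be an integer, s ∈ (0,1), and C₀ ≥ 1 sufficiently large (depending only on s). Then Σ_{j=1}^{⌊m/2⌋-1} [m!/(j·(m-j)⁴)] · ((j-1)!)^{1/(2s)} · ((m-j-4)!)^{1/(2s)} ≤ C C₀ ((m-4)!)^{(1+2s)/(2s)} for a constant C depending only on s (independent of m and C₀). -/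
/-!
Each summand is at most `16 (m-4)! ((m-5)!)^(1/(2s)) / j`: for `j < m/2` we have
`(m-j)⁴ ≥ m⁴/16`, which absorbs the top four factors of `m!`, and
`(j-1)! (m-j-4)! ≤ (m-5)!`.
The remaining harmonic sum is at most `2 √(m-4) ≤ 2 (m-4)^(1/(2s))` because `s < 1`, and this
last factor turns `((m-5)!)^(1/(2s))` into `((m-4)!)^(1/(2s))`. Hence `C = 32` works.
-/

open scoped Nat

theorem Nat.factorial_le_pow_mul_factorial_sub {n k : ℕ} (hk : k ≤ n) :
    n ! ≤ n ^ k * (n - k)! := by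
  rw [← Nat.factorial_mul_descFactorial hk, mul_comm]
  exact Nat.mul_le_mul_right _ (Nat.descFactorial_le_pow n k)

theorem Nat.factorial_mul_factorial_le_factorial_add (a b : ℕ) : a ! * b ! ≤ (a + b)! :=
  Nat.le_of_dvd (Nat.factorial_pos _) (Nat.factorial_mul_factorial_dvd_factorial_add a b)

theorem Real.one_div_nat_succ_le_two_mul_sqrt_sub (n : ℕ) :
    1 / ((n : ℝ) + 1) ≤ 2 * (√((n : ℝ) + 1) - √n) := by
  set a := √(n : ℝ)
  set b := √((n : ℝ) + 1)
  have ha : 0 ≤ a := Real.sqrt_nonneg _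
  have ha2 : a ^ 2 = n := Real.sq_sqrt n.cast_nonneg
  have hb2 : b ^ 2 = (n : ℝ) + 1 := Real.sq_sqrt (by positivity)
  have hab : a ≤ b := Real.sqrt_le_sqrt (by linarith)
  have hb : b ≤ (n : ℝ) + 1 := by nlinarith
  rw [div_le_iff₀ (by positivity)]
  -- `(b - a) (b + a) = 1` and `b + a ≤ 2 (n + 1)`
  nlinarith [mul_nonneg (sub_nonneg.2 hab)
    (by nlinarith : (0 : ℝ) ≤ 2 * ((n : ℝ) + 1) - (a + b))]

theorem Real.sum_Icc_one_div_le_two_mul_sqrt (n : ℕ) :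
    ∑ j ∈ Finset.Icc 1 n, 1 / (j : ℝ) ≤ 2 * √n := by
  induction n with
  | zero => simp
  | succ n ih =>
    rw [Finset.sum_Icc_succ_top (by omega), Nat.cast_succ]
    linarith [Real.one_div_nat_succ_le_two_mul_sqrt_sub n]

theorem Real.sqrt_le_rpow {x e : ℝ} (hx : 1 ≤ x) (he : 1 / 2 ≤ e) : √x ≤ x ^ e := by
  rw [Real.sqrt_eq_rpow]
  exact Real.rpow_le_rpow_of_exponent_le hx he

theorem Nat.factorial_le_two_mul_sub_pow_mul {m j k : ℕ} (hk : k ≤ m) (hj : 2 * j ≤ m) :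
    m ! ≤ (2 * (m - j)) ^ k * (m - k)! :=
  (Nat.factorial_le_pow_mul_factorial_sub hk).trans <|
    Nat.mul_le_mul_right _ (Nat.pow_le_pow_left (by omega) k)

section GevreyTerm

variable {e : ℝ} {m j : ℕ}

theorem factorial_div_mul_pow_le (hj : 1 ≤ j) (hjm : 2 * j ≤ m) (hm : 4 ≤ m) :
    (m ! : ℝ) / ((j : ℝ) * ((m - j : ℕ) : ℝ) ^ 4) ≤ 16 * (m - 4)! / j := by
  have hmj : (0 : ℝ) < ((m - j : ℕ) : ℝ) := by exact_mod_cast (by omega : 0 < m - j)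
  rw [div_mul_eq_div_div_swap, div_le_div_iff_of_pos_right (by positivity),
    div_le_iff₀ (by positivity)]
  have := Nat.factorial_le_two_mul_sub_pow_mul hm hjm
  rw [mul_pow] at this
  calc (m ! : ℝ) ≤ ((2 ^ 4 * (m - j) ^ 4 * (m - 4)! : ℕ) : ℝ) := by exact_mod_cast this
    _ = 16 * (m - 4)! * ((m - j : ℕ) : ℝ) ^ 4 := by
      push_cast [Nat.cast_sub (by omega : j ≤ m)]
      ring

theorem factorial_rpow_mul_factorial_rpow_le (he : 0 ≤ e) (hj : 1 ≤ j) (hjm : j + 4 ≤ m) :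
    ((j - 1)! : ℝ) ^ e * ((m - j - 4)! : ℝ) ^ e ≤ ((m - 5)! : ℝ) ^ e := by
  rw [← Real.mul_rpow (by positivity) (by positivity)]
  gcongr
  have := Nat.factorial_mul_factorial_le_factorial_add (j - 1) (m - j - 4)
  rw [show j - 1 + (m - j - 4) = m - 5 by omega] at this
  exact_mod_cast this

theorem gevrey_term_le (he : 0 ≤ e) (hj : j ∈ Finset.Ico 1 (m / 2)) (hm : 5 ≤ m) :
    (m ! : ℝ) / ((j : ℝ) * ((m - j : ℕ) : ℝ) ^ 4) * ((j - 1)! : ℝ) ^ e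
        * ((m - j - 4)! : ℝ) ^ e ≤ 16 * (m - 4)! * ((m - 5)! : ℝ) ^ e * (1 / j) := by
  obtain ⟨hj1, hjm⟩ := Finset.mem_Ico.1 hj
  rw [mul_assoc]
  calc _ ≤ 16 * (m - 4)! / j * ((m - 5)! : ℝ) ^ e :=
        mul_le_mul (factorial_div_mul_pow_le hj1 (by omega) (by omega))
          (factorial_rpow_mul_factorial_rpow_le he hj1 (by omega)) (by positivity)
          (by positivity)
    _ = _ := by ring

theorem sum_Ico_one_div_le_rpow (he : 1 / 2 ≤ e) (hm : 5 ≤ m) :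
    ∑ j ∈ Finset.Ico 1 (m / 2), 1 / (j : ℝ) ≤ 2 * ((m - 4 : ℕ) : ℝ) ^ e := by
  calc _ ≤ ∑ j ∈ Finset.Icc 1 (m - 4), 1 / (j : ℝ) := by
        refine Finset.sum_le_sum_of_subset_of_nonneg ?_ fun _ _ _ => by positivity
        intro j hj
        simp only [Finset.mem_Ico, Finset.mem_Icc] at hj ⊢
        omega
    _ ≤ 2 * √((m - 4 : ℕ) : ℝ) := Real.sum_Icc_one_div_le_two_mul_sqrt _
    _ ≤ _ := by gcongr; exact Real.sqrt_le_rpow (by exact_mod_cast (by omega : 1 ≤ m - 4)) he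

theorem factorial_rpow_mul_cast_rpow (hm : 5 ≤ m) :
    ((m - 5)! : ℝ) ^ e * ((m - 4 : ℕ) : ℝ) ^ e = ((m - 4)! : ℝ) ^ e := by
  rw [← Real.mul_rpow (by positivity) (by positivity), show m - 4 = m - 5 + 1 by omega,
    Nat.factorial_succ, Nat.cast_mul, mul_comm]

end GevreyTerm

/-- Key combinatorial estimate for closing the Gevrey induction: for `s ∈ (0,1)` there is
`C = C(s) > 0` such that for all `C₀ ≥ 1` and integers `m ≥ 5`,
`Σ_{j=1}^{⌊m/2⌋-1} [m!/(j(m-j)⁴)]((j-1)!)^{1/(2s)}((m-j-4)!)^{1/(2s)}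
  ≤ C C₀ ((m-4)!)^{(1+2s)/(2s)}`. -/
theorem gevrey_induction_sum_bound (s : ℝ) (hs : s ∈ Set.Ioo (0 : ℝ) 1) :
    ∃ C > (0 : ℝ), ∀ C₀ : ℝ, 1 ≤ C₀ → ∀ m : ℕ, 5 ≤ m →
      ∑ j ∈ Finset.Ico 1 (m / 2),
          (m.factorial : ℝ) / ((j : ℝ) * ((m - j : ℕ) : ℝ) ^ 4)
            * ((j - 1).factorial : ℝ) ^ (1 / (2 * s))
            * ((m - j - 4).factorial : ℝ) ^ (1 / (2 * s))
        ≤ C * C₀ * ((m - 4).factorial : ℝ) ^ ((1 + 2 * s) / (2 * s)) := by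
  obtain ⟨hs0, hs1⟩ := hs
  have he : 1 / 2 ≤ 1 / (2 * s) := one_div_le_one_div_of_le (by positivity) (by linarith)
  have hexp : (1 + 2 * s) / (2 * s) = 1 + 1 / (2 * s) := by field_simp; ring
  refine ⟨32, by norm_num, fun C₀ hC₀ m hm => ?_⟩
  have hfac : (0 : ℝ) < (m - 4)! := by positivity
  calc _ ≤ ∑ j ∈ Finset.Ico 1 (m / 2),
          16 * (m - 4)! * ((m - 5)! : ℝ) ^ (1 / (2 * s)) * (1 / j) :=
        Finset.sum_le_sum fun j hj => gevrey_term_le (by positivity) hj hm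
    _ = 16 * (m - 4)! * ((m - 5)! : ℝ) ^ (1 / (2 * s))
          * ∑ j ∈ Finset.Ico 1 (m / 2), 1 / (j : ℝ) := by
        rw [Finset.mul_sum]
    _ ≤ 16 * (m - 4)! * ((m - 5)! : ℝ) ^ (1 / (2 * s))
          * (2 * ((m - 4 : ℕ) : ℝ) ^ (1 / (2 * s))) := by
        gcongr; exact sum_Ico_one_div_le_rpow he hm
    _ = 32 * ((m - 4)! : ℝ) ^ (1 + 1 / (2 * s)) := by
        rw [Real.rpow_add hfac, Real.rpow_one, ← factorial_rpow_mul_cast_rpow hm]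
        ring
    _ ≤ 32 * C₀ * ((m - 4).factorial : ℝ) ^ ((1 + 2 * s) / (2 * s)) := by
        rw [hexp]; gcongr; linarith
end
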